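/- arXiv:2501.09293 — 2 statements merged into one kernel-verified Lean document; each statement's English description precedes it below -/
import Mathlib

section
/- Every doubly stochastic matrix A ∈ ℝ^{N×N} can be written as a convex combination A = ∑_{i=1}^{k} c_i P_i of permutation matrices P_i, with c_i ∈ (0,1], ∑ c_i = 1, and k ≤ N² - 2N + 2. -/
/-!
By Birkhoff's theorem `A` lies in the convex hull of the permutation matrices, and Carathéodory's
theorem writes it as a positive convex combination of affinely independent ones. All doubly
stochastic matrices lie in one affine subspace, whose direction consists of the matrices with
vanishing row and column sums; such a matrix is determined by its entries off one row and one
column, so this direction has dimension at most `(N - 1)²`. Affine independence then bounds the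
number of permutation matrices by `(N - 1)² + 1 = N² - 2N + 2`.
-/

open Finset Matrix Module

namespace Matrix

variable {m n R : Type*} [Fintype m] [Fintype n]

variable (m n R) in
def lineSumsZero [Semiring R] : Submodule R (Matrix m n R) where
  carrier := {M | (∀ i, ∑ j, M i j = 0) ∧ ∀ j, ∑ i, M i j = 0}
  add_mem' ha hb := ⟨fun i => by simp [sum_add_distrib, ha.1 i, hb.1 i],
    fun j => by simp [sum_add_distrib, ha.2 j, hb.2 j]⟩
  zero_mem' := by simp
  smul_mem' c _ hM := ⟨fun i => by simp [← mul_sum, hM.1 i], fun j => by simp [← mul_sum, hM.2 j]⟩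

theorem eq_zero_of_mem_lineSumsZero [Semiring R] {M : Matrix m n R} (hM : M ∈ lineSumsZero m n R)
    (i₀ : m) (j₀ : n) (h : ∀ i j, i ≠ i₀ → j ≠ j₀ → M i j = 0) : M = 0 := by
  have off_row : ∀ i, i ≠ i₀ → ∀ j, M i j = 0 := by
    intro i hi j
    obtain rfl | hj := eq_or_ne j j₀
    · rw [← hM.1 i, Fintype.sum_eq_single j fun j' hj' => h i j' hi hj']
    · exact h i j hi hj
  ext i j
  obtain rfl | hi := eq_or_ne i i₀
  · rw [zero_apply, ← hM.2 j, Fintype.sum_eq_single i fun i' hi' => off_row i' hi' j]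
  · exact off_row i hi j

theorem finrank_lineSumsZero_le [Field R] :
    finrank R (lineSumsZero m n R) ≤ (Fintype.card m - 1) * (Fintype.card n - 1) := by
  classical
  rcases isEmpty_or_nonempty m with hm | ⟨⟨i₀⟩⟩
  · exact (Submodule.finrank_le _).trans (by simp [finrank_matrix])
  rcases isEmpty_or_nonempty n with hn | ⟨⟨j₀⟩⟩
  · exact (Submodule.finrank_le _).trans (by simp [finrank_matrix])
  let restrict : lineSumsZero m n R →ₗ[R] Matrix {i // i ≠ i₀} {j // j ≠ j₀} R :=
    { toFun M := (M : Matrix m n R).submatrix Subtype.val Subtype.val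
      map_add' _ _ := rfl
      map_smul' _ _ := rfl }
  have : Function.Injective restrict := by
    rw [← LinearMap.ker_eq_bot, LinearMap.ker_eq_bot']
    intro M hM
    exact Subtype.ext <| eq_zero_of_mem_lineSumsZero M.2 i₀ j₀ fun i j hi hj =>
      congr_fun₂ hM ⟨i, hi⟩ ⟨j, hj⟩
  simpa [finrank_matrix, Fintype.card_subtype_compl] using
    LinearMap.finrank_le_finrank_of_injective this

theorem finrank_vectorSpan_le_of_subset_doublyStochastic [Field R] [LinearOrder R]
    [IsStrictOrderedRing R] [DecidableEq n] {s : Set (Matrix n n R)}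
    (hs : s ⊆ doublyStochastic R n) :
    finrank R (vectorSpan R s) ≤ (Fintype.card n - 1) * (Fintype.card n - 1) := by
  refine le_trans (Submodule.finrank_mono ?_) finrank_lineSumsZero_le
  rw [vectorSpan_def, Submodule.span_le]
  rintro _ ⟨A, hA, B, hB, rfl⟩
  exact ⟨fun i => by simp [sum_sub_distrib, sum_row_of_mem_doublyStochastic (hs hA),
      sum_row_of_mem_doublyStochastic (hs hB)],
    fun j => by simp [sum_sub_distrib, sum_col_of_mem_doublyStochastic (hs hA),
      sum_col_of_mem_doublyStochastic (hs hB)]⟩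

end Matrix

theorem exists_fin_pos_convex_combination_of_mem_convexHull_range {𝕜 E ι : Type*} [Field 𝕜]
    [LinearOrder 𝕜] [IsStrictOrderedRing 𝕜] [AddCommGroup E] [Module 𝕜 E] [FiniteDimensional 𝕜 E]
    {f : ι → E} {x : E} (hx : x ∈ convexHull 𝕜 (Set.range f)) :
    ∃ (k : ℕ) (c : Fin k → 𝕜) (σ : Fin k → ι), k ≤ finrank 𝕜 (vectorSpan 𝕜 (Set.range f)) + 1 ∧
      (∀ u, 0 < c u) ∧ ∑ u, c u = 1 ∧ ∑ u, c u • f (σ u) = x := by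
  obtain ⟨κ, _, z, w, hz, hind, hw, hw1, rfl⟩ := eq_pos_convex_span_of_mem_convexHull hx
  choose σ hσ using Set.range_subset_iff.1 hz
  let e := (Fintype.equivFin κ).symm
  refine ⟨Fintype.card κ, w ∘ e, σ ∘ e, ?_, fun u => hw (e u), (e.sum_comp w).trans hw1, ?_⟩
  · exact hind.card_le_finrank_succ.trans
      (Nat.succ_le_succ (Submodule.finrank_mono (vectorSpan_mono 𝕜 hz)))
  · simp only [Function.comp_apply, hσ]
    exact e.sum_comp fun i => w i • z i

/-- Birkhoff–von Neumann theorem with the bound k ≤ N² - 2N + 2 on the number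
of permutation matrices. -/
theorem birkhoff_von_neumann_with_bound (N : ℕ) (A : Matrix (Fin N) (Fin N) ℝ)
    (hnn : ∀ i j, 0 ≤ A i j)
    (hrow : ∀ i, ∑ j, A i j = 1)
    (hcol : ∀ j, ∑ i, A i j = 1) :
    ∃ (k : ℕ) (c : Fin k → ℝ) (σ : Fin k → Equiv.Perm (Fin N)),
      k ≤ N ^ 2 - 2 * N + 2 ∧
      (∀ u, c u ∈ Set.Ioc (0 : ℝ) 1) ∧
      (∑ u, c u = 1) ∧
      A = ∑ u, c u • (σ u).permMatrix ℝ := by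
  have hA : A ∈ convexHull ℝ (Set.range fun σ : Equiv.Perm (Fin N) => σ.permMatrix ℝ) :=
    doublyStochastic_eq_convexHull_permMatrix.le (mem_doublyStochastic_iff_sum.2 ⟨hnn, hrow, hcol⟩)
  obtain ⟨k, c, σ, hk, hc, hc1, hA_eq⟩ :=
    exists_fin_pos_convex_combination_of_mem_convexHull_range hA
  have hdim := finrank_vectorSpan_le_of_subset_doublyStochastic <| Set.range_subset_iff.2
    fun σ : Equiv.Perm (Fin N) => permMatrix_mem_doublyStochastic (R := ℝ) (σ := σ)
  rw [Fintype.card_fin] at hdim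
  have hbound : (N - 1) * (N - 1) + 1 ≤ N ^ 2 - 2 * N + 2 := by
    rcases N with _ | m
    · simp
    · rw [Nat.add_sub_cancel, ← sq, add_sq]
      omega
  refine ⟨k, c, σ, ?_, fun u => ⟨hc u, hc1 ▸ single_le_sum (fun v _ => (hc v).le) (mem_univ u)⟩,
    hc1, hA_eq.symm⟩
  omega
end

section
/- Every doubly stochastic matrix is a convex combination of permutation matrices. -/
/-- Birkhoff–von Neumann theorem (existence form): every doubly stochastic
matrix is a convex combination of permutation matrices. -/
theorem birkhoff_von_neumann (N : ℕ) (A : Matrix (Fin N) (Fin N) ℝ)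
    (hnn : ∀ i j, 0 ≤ A i j)
    (hrow : ∀ i, ∑ j, A i j = 1)
    (hcol : ∀ j, ∑ i, A i j = 1) :
    ∃ (k : ℕ) (c : Fin k → ℝ) (σ : Fin k → Equiv.Perm (Fin N)),
      (∀ u, 0 ≤ c u) ∧
      (∑ u, c u = 1) ∧
      A = ∑ u, c u • (σ u).permMatrix ℝ := by
  have hA : A ∈ doublyStochastic ℝ (Fin N) :=
    mem_doublyStochastic_iff_sum.mpr ⟨hnn, hrow, hcol⟩
  obtain ⟨w, hw0, hw1, hwA⟩ := exists_eq_sum_perm_of_mem_doublyStochastic hA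
  let enum := (Fintype.equivFin (Equiv.Perm (Fin N))).symm
  refine ⟨Fintype.card (Equiv.Perm (Fin N)), w ∘ enum, enum, fun u => hw0 _, ?_, ?_⟩
  · rw [← hw1]
    exact Equiv.sum_comp enum w
  · rw [← hwA]
    exact (Equiv.sum_comp enum fun σ => w σ • σ.permMatrix ℝ).symm
end
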